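/- Dilation and contraction conserve mass: for f ∈ 𝓕, g := 𝒟_a f, and any a, b, c ∈ ℝ, ∫_{D_{f,a}(b)}^{D_{f,a}(c)} σ_g(y) dy = ∫_b^c σ_f(x) dx. -/

import Mathlib

open MeasureTheory Filter Topology

/-- The mass function `σ_f(x) = ∬ r f(x,v,r) dv dr` of a density `f` on position–velocity–length
space (written in curried form `f x v r`). -/
noncomputable def sigmaF (f : ℝ → ℝ → ℝ → ℝ) (x : ℝ) : ℝ :=
  ∫ p : ℝ × ℝ, p.2 * f x p.1 p.2

/-- The class `𝓛` of dominating profiles: nonnegative `γ(v,r)` with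
`∬ (v² + r² + 1) γ(v,r) dv dr < ∞`. -/
def MemL (γ : ℝ → ℝ → ℝ) : Prop :=
  (∀ v r : ℝ, 0 ≤ γ v r) ∧
  Integrable (fun p : ℝ × ℝ => (p.1 ^ 2 + p.2 ^ 2 + 1) * γ p.1 p.2)

/-- The class `𝓕_γ`: nonnegative measurable densities `f(x,v,r)`, `C¹` in `x`, with `f` and
`∂ₓ f` dominated by `γ(v,r)`. -/
def MemFgamma (f : ℝ → ℝ → ℝ → ℝ) (γ : ℝ → ℝ → ℝ) : Prop :=
  Measurable (fun p : ℝ × ℝ × ℝ => f p.1 p.2.1 p.2.2) ∧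
  (∀ x v r : ℝ, 0 ≤ f x v r) ∧
  (∀ v r : ℝ, ContDiff ℝ 1 fun x => f x v r) ∧
  (∀ x v r : ℝ, f x v r ≤ γ v r) ∧
  (∀ x v r : ℝ, |deriv (fun x' => f x' v r) x| ≤ γ v r)

/-- The class `𝓕` of admissible densities: `f ∈ 𝓕_γ` for some `γ ∈ 𝓛`, with everywhere
positive mass function `σ_f`. -/
def MemF (f : ℝ → ℝ → ℝ → ℝ) : Prop :=
  (∃ γ, MemL γ ∧ MemFgamma f γ) ∧ ∀ x : ℝ, 0 < sigmaF f x

/-- The class `𝓖` of dilated densities: `g ∈ 𝓕` with `‖σ_g‖_∞ < 1`. -/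
def MemG (g : ℝ → ℝ → ℝ → ℝ) : Prop :=
  MemF g ∧ ∃ c : ℝ, c < 1 ∧ ∀ x : ℝ, sigmaF g x ≤ c

/-- The dilation function `D_{f,a}(b) = b + ∫_a^b σ_f(x) dx`. -/
noncomputable def Dfun (f : ℝ → ℝ → ℝ → ℝ) (a b : ℝ) : ℝ :=
  b + ∫ x in a..b, sigmaF f x

/-- The contraction function `C_{g,a}(b) = b - ∫_a^b σ_g(y) dy`. -/
noncomputable def Cfun (g : ℝ → ℝ → ℝ → ℝ) (a b : ℝ) : ℝ :=
  b - ∫ x in a..b, sigmaF g x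

/-- The dilation operator `𝒟_q f (y,v,r) = f(D_{f,q}⁻¹(y),v,r) / (1 + σ_f(D_{f,q}⁻¹(y)))`. -/
noncomputable def Dop (f : ℝ → ℝ → ℝ → ℝ) (q : ℝ) : ℝ → ℝ → ℝ → ℝ :=
  fun y v r =>
    f (Function.invFun (Dfun f q) y) v r / (1 + sigmaF f (Function.invFun (Dfun f q) y))

/-- The contraction operator `𝒞_q g (x,v,r) = g(C_{g,q}⁻¹(x),v,r) / (1 - σ_g(C_{g,q}⁻¹(x)))`. -/
noncomputable def Cop (g : ℝ → ℝ → ℝ → ℝ) (q : ℝ) : ℝ → ℝ → ℝ → ℝ :=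
  fun x v r =>
    g (Function.invFun (Cfun g q) x) v r / (1 - sigmaF g (Function.invFun (Cfun g q) x))

/-- The spatial shift operator `S_c h (x,v,r) = h(x - c, v, r)`. -/
def Sop (c : ℝ) (h : ℝ → ℝ → ℝ → ℝ) : ℝ → ℝ → ℝ → ℝ := fun x v r => h (x - c) v r

/-- The free (ideal gas) evolution `𝒯_t f (x,v,r) = f(x - v t, v, r)`. -/
def Tfree (t : ℝ) (f : ℝ → ℝ → ℝ → ℝ) : ℝ → ℝ → ℝ → ℝ := fun x v r => f (x - v * t) v r

/-- The mass flow `j_f⁺(x,v,t) = ∫_{w<v} ∫_x^{x+(v-w)t} ∫ r f(z,w,r) dr dz dw`: the mass with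
speed less than `v` crossing the trajectory `s ↦ x + v s` during `[0,t]`. -/
noncomputable def jplus (f : ℝ → ℝ → ℝ → ℝ) (x v t : ℝ) : ℝ :=
  ∫ w in Set.Iio v, (∫ z in x..(x + (v - w) * t), (∫ r : ℝ, r * f z w r))

/-- The mass flow `j_f⁻(x,v,t) = ∫_{w>v} ∫_{x+(v-w)t}^x ∫ r f(z,w,r) dr dz dw`: the mass with
speed greater than `v` crossing the trajectory `s ↦ x + v s` during `[0,t]`. -/
noncomputable def jminus (f : ℝ → ℝ → ℝ → ℝ) (x v t : ℝ) : ℝ :=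
  ∫ w in Set.Ioi v, (∫ z in (x + (v - w) * t)..x, (∫ r : ℝ, r * f z w r))

/-- The net mass flow `j_f = j_f⁺ - j_f⁻`. -/
noncomputable def jflow (f : ℝ → ℝ → ℝ → ℝ) (x v t : ℝ) : ℝ := jplus f x v t - jminus f x v t

/-- The macroscopic quasiparticle position `u_{g,v,t}(q) = q + v t + j_{𝒞_q g}(q,v,t)`. -/
noncomputable def uqp (g : ℝ → ℝ → ℝ → ℝ) (v t q : ℝ) : ℝ :=
  q + v * t + jflow (Cop g q) q v t

/-- The hard-rod evolution operator `𝒰_t g = S_{o_t} 𝒟_0 𝒯_t 𝒞_0 g` with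
`o_t = j_{𝒞_0 g}(0,0,t)`. -/
noncomputable def Uop (t : ℝ) (g : ℝ → ℝ → ℝ → ℝ) : ℝ → ℝ → ℝ → ℝ :=
  Sop (jflow (Cop g 0) 0 0 t) (Dop (Tfree t (Cop g 0)) 0)


/-!
`D = D_{f,a}` has derivative `1 + σ_f ≥ 1` and is therefore an increasing homeomorphism of `ℝ`,
while `σ_{𝒟_a f} = σ_f / (1 + σ_f) ∘ D⁻¹`. The substitution `y = D x`, `dy = (1 + σ_f x) dx`,
turns `∫ σ_{𝒟_a f} dy` into `∫ σ_f dx`.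
-/

open Function

noncomputable def dilation (s : ℝ → ℝ) (a x : ℝ) : ℝ :=
  x + ∫ t in a..x, s t

theorem Dfun_eq_dilation (f : ℝ → ℝ → ℝ → ℝ) (a : ℝ) : Dfun f a = dilation (sigmaF f) a := rfl

section Dilation

variable {s : ℝ → ℝ} (a : ℝ)

theorem hasDerivAt_dilation (hs : Continuous s) (x : ℝ) : HasDerivAt (dilation s a) (1 + s x) x :=
  (hasDerivAt_id x).add <| intervalIntegral.integral_hasDerivAt_right (hs.intervalIntegrable a x)
    hs.stronglyMeasurable.stronglyMeasurableAtFilter hs.continuousAt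

theorem continuous_dilation (hs : Continuous s) : Continuous (dilation s a) :=
  continuous_iff_continuousAt.2 fun x => (hasDerivAt_dilation a hs x).continuousAt

theorem strictMono_dilation (hs : Continuous s) (hs0 : ∀ x, 0 ≤ s x) : StrictMono (dilation s a) :=
  strictMono_of_deriv_pos fun x => by
    rw [(hasDerivAt_dilation a hs x).deriv]
    linarith [hs0 x]

theorem le_dilation_of_le (hs0 : ∀ x, 0 ≤ s x) {x : ℝ} (hx : a ≤ x) : x ≤ dilation s a x :=
  le_add_of_nonneg_right <| intervalIntegral.integral_nonneg hx fun t _ => hs0 t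

theorem dilation_le_of_le (hs0 : ∀ x, 0 ≤ s x) {x : ℝ} (hx : x ≤ a) : dilation s a x ≤ x := by
  rw [dilation, intervalIntegral.integral_symm]
  exact add_le_of_nonpos_right <| neg_nonpos.2 <|
    intervalIntegral.integral_nonneg hx fun t _ => hs0 t

theorem surjective_dilation (hs : Continuous s) (hs0 : ∀ x, 0 ≤ s x) : Surjective (dilation s a) :=
  (continuous_dilation a hs).surjective
    (tendsto_atTop_mono' _ (eventually_ge_atTop a |>.mono fun _ => le_dilation_of_le a hs0)
      tendsto_id)
    (tendsto_atBot_mono' _ (eventually_le_atBot a |>.mono fun _ => dilation_le_of_le a hs0)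
      tendsto_id)

theorem continuous_invFun_dilation (hs : Continuous s) (hs0 : ∀ x, 0 ≤ s x) :
    Continuous (invFun (dilation s a)) := by
  have hmono := strictMono_dilation a hs hs0
  have hsurj := surjective_dilation a hs hs0
  let e : ℝ ≃o ℝ := hmono.orderIsoOfSurjective _ hsurj
  have he : invFun (dilation s a) = e.symm := funext fun y =>
    hmono.injective <| (invFun_eq (hsurj y)).trans (e.apply_symm_apply y).symm
  exact he ▸ e.symm.continuous

theorem integral_div_one_add_comp_invFun_dilation (hs : Continuous s) (hs0 : ∀ x, 0 ≤ s x)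
    (b c : ℝ) :
    ∫ y in dilation s a b..dilation s a c,
        s (invFun (dilation s a) y) / (1 + s (invFun (dilation s a) y)) =
      ∫ x in b..c, s x := by
  have hinv := continuous_invFun_dilation a hs hs0
  have hleft : LeftInverse (invFun (dilation s a)) (dilation s a) :=
    leftInverse_invFun (strictMono_dilation a hs hs0).injective
  have hpos : ∀ x, 0 < 1 + s x := fun x => by linarith [hs0 x]
  have hg : Continuous fun y => s (invFun (dilation s a) y) / (1 + s (invFun (dilation s a) y)) :=
    (hs.comp hinv).div (continuous_const.add (hs.comp hinv)) fun y => (hpos _).ne'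
  rw [← intervalIntegral.integral_deriv_smul_comp (fun x _ => hasDerivAt_dilation a hs x)
    (continuous_const.add hs).continuousOn hg]
  refine intervalIntegral.integral_congr fun x _ => ?_
  simp only [comp_apply, hleft x, smul_eq_mul]
  field_simp [(hpos x).ne']

end Dilation

theorem integrable_abs_snd_mul_of_memL {γ : ℝ → ℝ → ℝ} (hγ : MemL γ) :
    Integrable fun p : ℝ × ℝ => |p.2| * γ p.1 p.2 := by
  obtain ⟨hγ0, hγint⟩ := hγ
  have hw : ∀ p : ℝ × ℝ, 0 < p.1 ^ 2 + p.2 ^ 2 + 1 := fun p => by positivity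
  have hcont : Continuous fun p : ℝ × ℝ => |p.2| / (p.1 ^ 2 + p.2 ^ 2 + 1) := by
    fun_prop (disch := exact fun p => (hw p).ne')
  refine (hγint.bdd_mul (c := 1) hcont.aestronglyMeasurable
    (ae_of_all _ fun p => ?_)).congr (ae_of_all _ fun p => ?_)
  · rw [Real.norm_eq_abs, abs_div, abs_abs, abs_of_pos (hw p), div_le_one (hw p)]
    nlinarith [sq_nonneg (|p.2| - 1), sq_abs p.2, sq_nonneg p.1]
  · field_simp [(hw p).ne']

theorem continuous_sigmaF {f : ℝ → ℝ → ℝ → ℝ} {γ : ℝ → ℝ → ℝ} (hγ : MemL γ)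
    (hf : MemFgamma f γ) : Continuous (sigmaF f) := by
  obtain ⟨hmeas, hf0, hC1, hdom, -⟩ := hf
  refine continuous_of_dominated (fun x => ?_) (fun x => ae_of_all _ fun p => ?_)
    (integrable_abs_snd_mul_of_memL hγ) (ae_of_all _ fun p => ?_)
  · exact (measurable_snd.mul (hmeas.comp (measurable_const.prodMk measurable_id)))
      |>.aestronglyMeasurable
  · rw [Real.norm_eq_abs, abs_mul, abs_of_nonneg (hf0 x p.1 p.2)]
    exact mul_le_mul_of_nonneg_left (hdom x p.1 p.2) (abs_nonneg _)
  · exact continuous_const.mul (hC1 p.1 p.2).continuous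

theorem sigmaF_Dop (f : ℝ → ℝ → ℝ → ℝ) (q y : ℝ) :
    sigmaF (Dop f q) y =
      sigmaF f (invFun (Dfun f q) y) / (1 + sigmaF f (invFun (Dfun f q) y)) := by
  simp only [sigmaF, Dop, ← integral_div, mul_div_assoc]

/-- Dilation conserves mass: for `f ∈ 𝓕` and `g = 𝒟_a f`,
`∫_{D_{f,a}(b)}^{D_{f,a}(c)} σ_g(y) dy = ∫_b^c σ_f(x) dx`. -/
theorem stmt9 (f : ℝ → ℝ → ℝ → ℝ) (hf : MemF f) (a b c : ℝ) :
    ∫ y in (Dfun f a b)..(Dfun f a c), sigmaF (Dop f a) y = ∫ x in b..c, sigmaF f x := by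
  obtain ⟨⟨γ, hγ, hfγ⟩, hσ_pos⟩ := hf
  simp only [sigmaF_Dop, Dfun_eq_dilation]
  exact integral_div_one_add_comp_invFun_dilation a (continuous_sigmaF hγ hfγ)
    (fun x => (hσ_pos x).le) b c
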